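/- Ordering of GMM solutions under three weighting schemes (simplified case): Let $\mathcal{L}(\Theta; w) = \sum_{i=1}^{N} w_i \log\sum_{k=1}^K \pi_k\mathcal{N}(e_i;\mu_k,\Sigma_k) + \sum_{i=N+1}^{N+N_s} w_i\log\sum_{k=1}^K\pi_k\mathcal{N}(e_i;\mu_k,\Sigma_k)$ where $\Theta=(\pi,\{\mu_k,\Sigma_k\})$. Consider the identical weights $w_i = 1/(N+N_s)$, ground-truth weights ($w_i=1/N$ for $i\le N$ and $0$ otherwise), and attention weights ($w_i=\lambda_1\in[1/(N+N_s),1/N]$ for $i\le N$, $w_i=\lambda_2\in(0,1/(N+N_s)]$ for $i>N$, with $N\lambda_1+N_s\lambda_2=1$). Let $\Theta_I, \Theta_G, \Theta_A$ be maximizers of $\mathcal{L}$ under each scheme respectively (assumed to exist). Then $\mathcal{L}(\Theta_I; w\!\to\!\mathrm{GT}) \le \mathcal{L}(\Theta_A; w\!\to\!\mathrm{GT}) \le \mathcal{L}(\Theta_G; w\!\to\!\mathrm{GT})$. -/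

import Mathlib

/-!
Write `F₁ Θ` and `F₂ Θ` for the summed log-likelihoods of the two groups of points. Adding the
optimality of `Θ_A` for `λ₁ F₁ + λ₂ F₂`, and `λ₂` times that of `Θ_I` for `F₁ + F₂`, gives
`(λ₁ - λ₂) F₁ Θ_I ≤ (λ₁ - λ₂) F₁ Θ_A`: the first inequality when `λ₂ < λ₁`. The second one is
the optimality of `Θ_G`.

In the boundary case `λ₁ = λ₂` both `Θ_I` and `Θ_A` maximise the same objective, and they define
the same density. For a single Gaussian this is uniqueness of the maximiser: in the natural
parameters `(Σ⁻¹, Σ⁻¹ μ)` the log-likelihood is strictly concave, by strict concavity of `log det`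
and joint convexity of `(P, b) ↦ b ⬝ᵥ P⁻¹ *ᵥ b`. With two or more components in positive
dimension there is no maximiser, since a component collapsing onto a data point drives the
likelihood to `+∞`; in dimension `0` every density is `1`.
-/

open Matrix

/-- Multivariate Gaussian density. -/
noncomputable def gaussPdf (d : ℕ) (mu : Fin d → ℝ)
    (S : Matrix (Fin d) (Fin d) ℝ) (x : Fin d → ℝ) : ℝ :=
  Real.exp (-(1 / 2) * ((x - mu) ⬝ᵥ (S⁻¹ *ᵥ (x - mu)))) /
    ((2 * Real.pi) ^ ((d : ℝ) / 2) * Real.sqrt S.det)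

/-- Parameters of a `K`-component Gaussian mixture model in `ℝ^d`. -/
structure GMMParams (d K : ℕ) where
  pi' : Fin K → ℝ
  mu : Fin K → Fin d → ℝ
  cov : Fin K → Matrix (Fin d) (Fin d) ℝ

/-- Valid GMM parameters: mixing proportions form a distribution and the
covariances are positive definite. -/
def GMMParams.Valid {d K : ℕ} (Θ : GMMParams d K) : Prop :=
  (∀ k, 0 ≤ Θ.pi' k) ∧ (∑ k, Θ.pi' k = 1) ∧ (∀ k, (Θ.cov k).PosDef)

/-- Mixture log-likelihood of one data point. -/
noncomputable def mixLogLik {d K : ℕ} (Θ : GMMParams d K) (x : Fin d → ℝ) : ℝ :=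
  Real.log (∑ k, Θ.pi' k * gaussPdf d (Θ.mu k) (Θ.cov k) x)

/-- Weighted GMM log-likelihood with per-group weights `w1` (non-stop-words)
and `w2` (stop-words). -/
noncomputable def gmmObj {d K N Ns : ℕ} (e1 : Fin N → Fin d → ℝ)
    (e2 : Fin Ns → Fin d → ℝ) (w1 w2 : ℝ) (Θ : GMMParams d K) : ℝ :=
  w1 * ∑ i, mixLogLik Θ (e1 i) + w2 * ∑ i, mixLogLik Θ (e2 i)

open Real

theorem le_of_isMaxOn_weighted_sum {α : Type*} {s : Set α} {f g : α → ℝ} {a b a' b' : ℝ}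
    {x y : α} (hb : 0 ≤ b) (hb' : 0 ≤ b') (hab : a' * b < a * b')
    (hx : IsMaxOn (fun z => a' * f z + b' * g z) s x)
    (hy : IsMaxOn (fun z => a * f z + b * g z) s y) (hxs : x ∈ s) (hys : y ∈ s) :
    f x ≤ f y := by
  have hxy : a * f x + b * g x ≤ a * f y + b * g y := hy hxs
  have hyx : a' * f y + b' * g y ≤ a' * f x + b' * g x := hx hys
  have key : (a * b' - a' * b) * f x ≤ (a * b' - a' * b) * f y := by
    nlinarith [mul_le_mul_of_nonneg_left hxy hb', mul_le_mul_of_nonneg_left hyx hb]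
  exact le_of_mul_le_mul_left key (sub_pos.mpr hab)

namespace Matrix

variable {n : Type*} [Fintype n] {P Q M : Matrix n n ℝ}

theorem IsHermitian.dotProduct_mulVec_comm (hP : P.IsHermitian) (x y : n → ℝ) :
    x ⬝ᵥ P *ᵥ y = y ⬝ᵥ P *ᵥ x := by
  have hPt : Pᵀ = P := by simpa [conjTranspose_eq_transpose_of_trivial] using hP.eq
  rw [dotProduct_mulVec, ← mulVec_transpose, hPt, dotProduct_comm]

variable [DecidableEq n]

theorem PosDef.mulVec_inv_mulVec (hP : P.PosDef) (v : n → ℝ) : P *ᵥ (P⁻¹ *ᵥ v) = v := by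
  rw [mulVec_mulVec, mul_nonsing_inv _ hP.det_pos.ne'.isUnit, one_mulVec]

theorem PosDef.dotProduct_inv_mulVec_eq (hP : P.PosDef) (b y : n → ℝ) :
    b ⬝ᵥ P⁻¹ *ᵥ b =
      2 * (b ⬝ᵥ y) - y ⬝ᵥ P *ᵥ y + (y - P⁻¹ *ᵥ b) ⬝ᵥ P *ᵥ (y - P⁻¹ *ᵥ b) := by
  have hPw := hP.mulVec_inv_mulVec b
  rw [mulVec_sub, hPw, sub_dotProduct, dotProduct_sub, dotProduct_sub,
    hP.isHermitian.dotProduct_mulVec_comm (P⁻¹ *ᵥ b) y, hPw, dotProduct_comm (P⁻¹ *ᵥ b),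
    dotProduct_comm y b]
  ring

theorem PosDef.two_mul_dotProduct_sub_le (hP : P.PosDef) (b y : n → ℝ) :
    2 * (b ⬝ᵥ y) - y ⬝ᵥ P *ᵥ y ≤ b ⬝ᵥ P⁻¹ *ᵥ b := by
  rw [hP.dotProduct_inv_mulVec_eq b y]
  simpa using hP.posSemidef.dotProduct_mulVec_nonneg (y - P⁻¹ *ᵥ b)

theorem PosDef.two_mul_dotProduct_sub_lt (hP : P.PosDef) {b y : n → ℝ} (hy : y ≠ P⁻¹ *ᵥ b) :
    2 * (b ⬝ᵥ y) - y ⬝ᵥ P *ᵥ y < b ⬝ᵥ P⁻¹ *ᵥ b := by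
  rw [hP.dotProduct_inv_mulVec_eq b y]
  simpa using hP.dotProduct_mulVec_pos (sub_ne_zero.mpr hy)

theorem IsHermitian.det_half_one_add (hM : M.IsHermitian) :
    ((2 : ℝ)⁻¹ • (1 + M)).det = ∏ i, (1 + hM.eigenvalues i) / 2 := by
  have hchar := congrArg (Polynomial.eval (-1 : ℝ)) hM.charpoly_eq
  rw [eval_charpoly, Polynomial.eval_prod] at hchar
  have hmat : (2 : ℝ)⁻¹ • (1 + M) = (-2⁻¹ : ℝ) • (scalar n (-1 : ℝ) - M) := by
    ext i j; by_cases hij : i = j <;> simp [hij]; ring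
  rw [hmat, det_smul, hchar, ← Finset.card_univ, ← Finset.prod_const, ← Finset.prod_mul_distrib]
  refine Finset.prod_congr rfl fun i _ => ?_
  simp only [ringHom_apply, Polynomial.eval_sub, Polynomial.eval_X, Polynomial.eval_C]
  ring

theorem IsHermitian.eq_one_of_eigenvalues_eq_one (hM : M.IsHermitian)
    (h : ∀ i, hM.eigenvalues i = 1) : M = 1 := by
  refine CFC.eq_one_of_spectrum_subset_one (R := ℝ) M ?_ hM.isSelfAdjoint
  rw [hM.spectrum_real_eq_range_eigenvalues]
  rintro _ ⟨i, rfl⟩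
  simp [h i]

-- AM-GM on each eigenvalue: `λ ≤ ((1 + λ) / 2) ^ 2`, strictly unless `λ = 1`.
theorem PosDef.det_lt_det_half_one_add_sq (hM : M.PosDef) (hne : M ≠ 1) :
    M.det < ((2 : ℝ)⁻¹ • (1 + M)).det ^ 2 := by
  obtain ⟨j, hj⟩ : ∃ j, hM.isHermitian.eigenvalues j ≠ 1 := by
    by_contra! h
    exact hne (hM.isHermitian.eq_one_of_eigenvalues_eq_one h)
  rw [hM.isHermitian.det_half_one_add, hM.isHermitian.det_eq_prod_eigenvalues, ← Finset.prod_pow]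
  simp only [RCLike.ofReal_real_eq_id, id]
  refine Finset.prod_lt_prod (fun i _ => hM.eigenvalues_pos i) (fun i _ => ?_)
    ⟨j, Finset.mem_univ _, ?_⟩
  · nlinarith [sq_nonneg (1 - hM.isHermitian.eigenvalues i)]
  · nlinarith [sq_pos_of_ne_zero (sub_ne_zero.mpr hj)]

-- Congruence by `√P` reduces the claim to the case `P = 1`.
open scoped MatrixOrder in
theorem PosDef.det_mul_det_lt_det_midpoint_sq (hP : P.PosDef) (hQ : Q.PosDef) (hne : P ≠ Q) :
    P.det * Q.det < ((2 : ℝ)⁻¹ • (P + Q)).det ^ 2 := by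
  set R := CFC.sqrt P
  have hRR : R * R = P := CFC.sqrt_mul_sqrt_self P hP.posSemidef.nonneg
  have hRh : R.IsHermitian := (nonneg_iff_posSemidef.mp (CFC.sqrt_nonneg P)).isHermitian
  have hRdet : R.det * R.det = P.det := by rw [← det_mul, hRR]
  have hRu : IsUnit R.det :=
    isUnit_iff_ne_zero.mpr fun h => hP.det_pos.ne' (by rw [← hRdet, h, zero_mul])
  set M := R⁻¹ * Q * R⁻¹
  have hM : M.PosDef := by
    have := hQ.conjTranspose_mul_mul_same <| mulVec_injective_of_isUnit <|
      isUnit_nonsing_inv_iff.mpr ((isUnit_iff_isUnit_det R).mpr hRu)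
    rwa [hRh.inv.eq] at this
  have hQ_eq : R * M * R = Q := by
    simp only [M, ← mul_assoc, mul_nonsing_inv _ hRu, one_mul]
    rw [mul_assoc, nonsing_inv_mul _ hRu, mul_one]
  have hmid : (2 : ℝ)⁻¹ • (P + Q) = R * ((2 : ℝ)⁻¹ • (1 + M)) * R := by
    rw [Matrix.mul_smul, Matrix.smul_mul, mul_add, add_mul, mul_one, hRR, hQ_eq]
  have hdetQ : Q.det = R.det * M.det * R.det := by rw [← hQ_eq, det_mul, det_mul]
  have hlt := hM.det_lt_det_half_one_add_sq fun h => hne (by rw [← hRR, ← hQ_eq, h, mul_one])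
  have hR2 : 0 < R.det * R.det := hRdet ▸ hP.det_pos
  rw [hmid, det_mul, det_mul, hdetQ, ← hRdet]
  nlinarith [mul_lt_mul_of_pos_left hlt (mul_pos hR2 hR2)]

theorem PosDef.log_det_add_log_det_lt (hP : P.PosDef) (hQ : Q.PosDef) (hne : P ≠ Q) :
    log P.det + log Q.det < 2 * log ((2 : ℝ)⁻¹ • (P + Q)).det := by
  have h := log_lt_log (mul_pos hP.det_pos hQ.det_pos) (hP.det_mul_det_lt_det_midpoint_sq hQ hne)
  rwa [log_mul hP.det_pos.ne' hQ.det_pos.ne', log_pow, Nat.cast_ofNat] at h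

end Matrix

section Gaussian

variable {d : ℕ}

theorem gaussPdf_pos {mu : Fin d → ℝ} {S : Matrix (Fin d) (Fin d) ℝ} (hS : S.PosDef)
    (x : Fin d → ℝ) : 0 < gaussPdf d mu S x :=
  div_pos (exp_pos _) (mul_pos (rpow_pos_of_pos (by positivity) _) (sqrt_pos.mpr hS.det_pos))

theorem log_gaussPdf {mu : Fin d → ℝ} {S : Matrix (Fin d) (Fin d) ℝ} (hS : S.PosDef)
    (x : Fin d → ℝ) :
    log (gaussPdf d mu S x) =
      -((x - mu) ⬝ᵥ S⁻¹ *ᵥ (x - mu)) / 2 - d / 2 * log (2 * π) - log S.det / 2 := by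
  have h2π : (0 : ℝ) < 2 * π := by positivity
  rw [gaussPdf, log_div (exp_ne_zero _)
      (mul_pos (rpow_pos_of_pos h2π _) (sqrt_pos.mpr hS.det_pos)).ne',
    log_exp, log_mul (rpow_pos_of_pos h2π _).ne' (sqrt_pos.mpr hS.det_pos).ne',
    log_rpow h2π, log_sqrt hS.det_pos.le]
  ring

/-- The log-partition function of the Gaussian family in the natural parameters
`(P, b) = (Σ⁻¹, Σ⁻¹ μ)`. -/
noncomputable def gaussLogPartition (d : ℕ) (P : Matrix (Fin d) (Fin d) ℝ) (b : Fin d → ℝ) :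
    ℝ :=
  (b ⬝ᵥ P⁻¹ *ᵥ b - log P.det + d * log (2 * π)) / 2

theorem log_gaussPdf_eq_natural {mu : Fin d → ℝ} {S : Matrix (Fin d) (Fin d) ℝ}
    (hS : S.PosDef) (x : Fin d → ℝ) :
    log (gaussPdf d mu S x) =
      (S⁻¹ *ᵥ mu) ⬝ᵥ x - x ⬝ᵥ S⁻¹ *ᵥ x / 2 - gaussLogPartition d S⁻¹ (S⁻¹ *ᵥ mu) := by
  have hmu : S⁻¹⁻¹ *ᵥ (S⁻¹ *ᵥ mu) = mu := by
    rw [Matrix.nonsing_inv_nonsing_inv _ hS.det_pos.ne'.isUnit, hS.mulVec_inv_mulVec]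
  have hsq := hS.inv.dotProduct_inv_mulVec_eq (S⁻¹ *ᵥ mu) x
  rw [hmu] at hsq
  rw [log_gaussPdf hS, gaussLogPartition, hmu, hsq, Matrix.det_nonsing_inv, Ring.inverse_eq_inv',
    log_inv]
  ring

theorem dotProduct_sub_dotProduct_mulVec_midpoint (P P' : Matrix (Fin d) (Fin d) ℝ)
    (b b' x : Fin d → ℝ) :
    ((2 : ℝ)⁻¹ • (b + b')) ⬝ᵥ x - x ⬝ᵥ ((2 : ℝ)⁻¹ • (P + P')) *ᵥ x / 2 =
      (b ⬝ᵥ x - x ⬝ᵥ P *ᵥ x / 2 + (b' ⬝ᵥ x - x ⬝ᵥ P' *ᵥ x / 2)) / 2 := by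
  simp only [Matrix.smul_mulVec, Matrix.add_mulVec, smul_dotProduct, dotProduct_smul,
    add_dotProduct, dotProduct_add, smul_eq_mul]
  ring

theorem gaussLogPartition_midpoint_lt {P P' : Matrix (Fin d) (Fin d) ℝ} {b b' : Fin d → ℝ}
    (hP : P.PosDef) (hP' : P'.PosDef) (hne : (P, b) ≠ (P', b')) :
    gaussLogPartition d ((2 : ℝ)⁻¹ • (P + P')) ((2 : ℝ)⁻¹ • (b + b')) <
      (gaussLogPartition d P b + gaussLogPartition d P' b') / 2 := by
  have hPm : ((2 : ℝ)⁻¹ • (P + P')).PosDef := (hP.add hP').smul (by norm_num)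
  -- `y` attains `sup_z (2 bₘ ⬝ᵥ z - z ⬝ᵥ Pₘ *ᵥ z) = bₘ ⬝ᵥ Pₘ⁻¹ *ᵥ bₘ` at the midpoint `(Pₘ, bₘ)`.
  obtain ⟨y, hy⟩ : ∃ y, y = ((2 : ℝ)⁻¹ • (P + P'))⁻¹ *ᵥ ((2 : ℝ)⁻¹ • (b + b')) := ⟨_, rfl⟩
  have hbm := hPm.dotProduct_inv_mulVec_eq ((2 : ℝ)⁻¹ • (b + b')) y
  rw [← hy, sub_self, zero_dotProduct, add_zero] at hbm
  have hsplit := dotProduct_sub_dotProduct_mulVec_midpoint P P' b b' y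
  have hq' := hP'.two_mul_dotProduct_sub_le b' y
  simp only [gaussLogPartition]
  rw [← hy]
  by_cases hPP : P = P'
  · subst hPP
    have hPm_eq : (2 : ℝ)⁻¹ • (P + P) = P := by
      rw [← two_smul ℝ P, smul_smul, inv_mul_cancel₀ two_ne_zero, one_smul]
    rw [hPm_eq] at hbm hsplit hy ⊢
    have hy' : y ≠ P⁻¹ *ᵥ b := by
      intro h
      have hb : (2 : ℝ)⁻¹ • (b + b') = b := by
        rw [← hP.mulVec_inv_mulVec ((2 : ℝ)⁻¹ • (b + b')), ← hy, h, hP.mulVec_inv_mulVec]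
      refine hne (congrArg _ (funext fun i => ?_))
      have := congrFun hb i
      simp only [Pi.smul_apply, Pi.add_apply, smul_eq_mul] at this
      linarith
    have hq := hP.two_mul_dotProduct_sub_lt hy'
    linarith
  · have hld := hP.log_det_add_log_det_lt hP' hPP
    have hq := hP.two_mul_dotProduct_sub_le b y
    linarith

end Gaussian

section Mixture

variable {d K N Ns : ℕ}

theorem log_le_mixLogLik {Θ : GMMParams d K} (hΘ : Θ.Valid) {k : Fin K} (hk : 0 < Θ.pi' k)
    (x : Fin d → ℝ) : log (Θ.pi' k * gaussPdf d (Θ.mu k) (Θ.cov k) x) ≤ mixLogLik Θ x :=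
  log_le_log (mul_pos hk (gaussPdf_pos (hΘ.2.2 k) x)) <| Finset.single_le_sum
    (fun j _ => mul_nonneg (hΘ.1 j) (gaussPdf_pos (hΘ.2.2 j) x).le) (Finset.mem_univ k)

theorem mixLogLik_of_dim_zero {Θ : GMMParams 0 K} (hΘ : Θ.Valid) (x : Fin 0 → ℝ) :
    mixLogLik Θ x = 0 := by
  simp [mixLogLik, gaussPdf, hΘ.2.1]

theorem mixLogLik_eq_natural {Θ : GMMParams d 1} (hΘ : Θ.Valid) {P : Matrix (Fin d) (Fin d) ℝ}
    {b : Fin d → ℝ} (hP : (Θ.cov 0)⁻¹ = P) (hb : P *ᵥ Θ.mu 0 = b) (x : Fin d → ℝ) :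
    mixLogLik Θ x = b ⬝ᵥ x - x ⬝ᵥ P *ᵥ x / 2 - gaussLogPartition d P b := by
  have hπ : Θ.pi' 0 = 1 := by simpa using hΘ.2.1
  subst hP hb
  simp only [mixLogLik, Fin.sum_univ_one, hπ, one_mul]
  exact log_gaussPdf_eq_natural (hΘ.2.2 0) x

theorem gmmObj_eq_midpoint_add (e1 : Fin N → Fin d → ℝ) (e2 : Fin Ns → Fin d → ℝ) (w1 w2 : ℝ)
    {Θ Θ₁ Θ₂ : GMMParams d K} {δ : ℝ}
    (h : ∀ x, mixLogLik Θ x = (mixLogLik Θ₁ x + mixLogLik Θ₂ x) / 2 + δ) :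
    gmmObj e1 e2 w1 w2 Θ =
      (gmmObj e1 e2 w1 w2 Θ₁ + gmmObj e1 e2 w1 w2 Θ₂) / 2 + (w1 * N + w2 * Ns) * δ := by
  simp only [gmmObj, h, Finset.sum_add_distrib, ← Finset.sum_div, Finset.sum_const,
    Finset.card_univ, Fintype.card_fin, nsmul_eq_mul]
  ring

-- Otherwise the midpoint of the natural parameters would be strictly better than both.
theorem mixLogLik_eq_of_isMaxOn_single {e1 : Fin N → Fin d → ℝ} {e2 : Fin Ns → Fin d → ℝ}
    {w1 w2 : ℝ} (hw : 0 < w1 * N + w2 * Ns) {Θ₁ Θ₂ : GMMParams d 1} (hV₁ : Θ₁.Valid) (hV₂ : Θ₂.Valid)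
    (h₁ : IsMaxOn (gmmObj e1 e2 w1 w2) {Θ | Θ.Valid} Θ₁)
    (h₂ : IsMaxOn (gmmObj e1 e2 w1 w2) {Θ | Θ.Valid} Θ₂) (x : Fin d → ℝ) :
    mixLogLik Θ₁ x = mixLogLik Θ₂ x := by
  obtain ⟨P₁, hP₁⟩ : ∃ P, (Θ₁.cov 0)⁻¹ = P := ⟨_, rfl⟩
  obtain ⟨P₂, hP₂⟩ : ∃ P, (Θ₂.cov 0)⁻¹ = P := ⟨_, rfl⟩
  obtain ⟨b₁, hb₁⟩ : ∃ b, P₁ *ᵥ Θ₁.mu 0 = b := ⟨_, rfl⟩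
  obtain ⟨b₂, hb₂⟩ : ∃ b, P₂ *ᵥ Θ₂.mu 0 = b := ⟨_, rfl⟩
  have hℓ₁ := mixLogLik_eq_natural hV₁ hP₁ hb₁
  have hℓ₂ := mixLogLik_eq_natural hV₂ hP₂ hb₂
  have hP₁pos : P₁.PosDef := hP₁ ▸ (hV₁.2.2 0).inv
  have hP₂pos : P₂.PosDef := hP₂ ▸ (hV₂.2.2 0).inv
  by_cases heq : (P₁, b₁) = (P₂, b₂)
  · obtain ⟨rfl, rfl⟩ := Prod.ext_iff.mp heq
    rw [hℓ₁, hℓ₂]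
  exfalso
  have hPm : ((2 : ℝ)⁻¹ • (P₁ + P₂)).PosDef := (hP₁pos.add hP₂pos).smul (by norm_num)
  let Θm : GMMParams d 1 :=
    ⟨fun _ => 1, fun _ => ((2 : ℝ)⁻¹ • (P₁ + P₂))⁻¹ *ᵥ ((2 : ℝ)⁻¹ • (b₁ + b₂)),
      fun _ => ((2 : ℝ)⁻¹ • (P₁ + P₂))⁻¹⟩
  have hVm : Θm.Valid := ⟨fun _ => zero_le_one, by simp [Θm], fun _ => hPm.inv⟩
  have hℓm := mixLogLik_eq_natural hVm
    (Matrix.nonsing_inv_nonsing_inv _ hPm.det_pos.ne'.isUnit) (hPm.mulVec_inv_mulVec _)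
  obtain ⟨δ, hδ_def⟩ : ∃ δ, δ = (gaussLogPartition d P₁ b₁ + gaussLogPartition d P₂ b₂) / 2 -
      gaussLogPartition d ((2 : ℝ)⁻¹ • (P₁ + P₂)) ((2 : ℝ)⁻¹ • (b₁ + b₂)) := ⟨_, rfl⟩
  have hδ : 0 < δ := hδ_def ▸ sub_pos.mpr (gaussLogPartition_midpoint_lt hP₁pos hP₂pos heq)
  have hmid : ∀ x, mixLogLik Θm x = (mixLogLik Θ₁ x + mixLogLik Θ₂ x) / 2 + δ := fun x => by
    rw [hℓ₁, hℓ₂, hℓm, hδ_def]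
    linarith [dotProduct_sub_dotProduct_mulVec_midpoint P₁ P₂ b₁ b₂ x]
  have hobj := gmmObj_eq_midpoint_add e1 e2 w1 w2 hmid
  have h₁₂ : gmmObj e1 e2 w1 w2 Θ₁ ≤ gmmObj e1 e2 w1 w2 Θ₂ := h₂ hV₁
  have h₂₁ : gmmObj e1 e2 w1 w2 Θ₂ ≤ gmmObj e1 e2 w1 w2 Θ₁ := h₁ hV₂
  have hm : gmmObj e1 e2 w1 w2 Θm ≤ gmmObj e1 e2 w1 w2 Θ₁ := h₁ hVm
  nlinarith [mul_pos hw hδ]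

end Mixture

section Unbounded

variable {d K N Ns : ℕ}

noncomputable def GMMParams.spike (x₀ : Fin d → ℝ) (ε : ℝ) : GMMParams d (K + 2) where
  pi' k := if (k : ℕ) < 2 then 2⁻¹ else 0
  mu k := if k = 0 then x₀ else 0
  cov k := if k = 0 then ε • 1 else 1

theorem GMMParams.spike_valid (x₀ : Fin d → ℝ) {ε : ℝ} (hε : 0 < ε) :
    (spike x₀ ε : GMMParams d (K + 2)).Valid := by
  refine ⟨fun k => ?_, ?_, fun k => ?_⟩
  · simp only [spike]; split_ifs <;> norm_num
  · norm_num [spike, Fin.sum_univ_succ]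
  · simp only [spike]; split_ifs
    exacts [Matrix.PosDef.one.smul hε, Matrix.PosDef.one]

theorem log_gaussPdf_smul_one_self (x₀ : Fin d → ℝ) {ε : ℝ} (hε : 0 < ε) :
    log (gaussPdf d x₀ (ε • 1) x₀) = -(d / 2 * log (2 * π)) - d / 2 * log ε := by
  rw [log_gaussPdf (Matrix.PosDef.one.smul hε), sub_self, Matrix.det_smul, Matrix.det_one,
    Fintype.card_fin, mul_one, log_pow]
  simp only [Matrix.mulVec_zero, dotProduct_zero]
  ring

theorem le_gmmObj_spike (e1 : Fin N → Fin d → ℝ) (e2 : Fin Ns → Fin d → ℝ) {w1 w2 : ℝ}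
    (hw1 : 0 ≤ w1) (hw2 : 0 ≤ w2) (i₀ : Fin N) {ε : ℝ} (hε : 0 < ε) :
    w1 * (log 2⁻¹ - d / 2 * log (2 * π) - d / 2 * log ε +
        ∑ i ∈ Finset.univ.erase i₀, log (2⁻¹ * gaussPdf d 0 1 (e1 i))) +
      w2 * ∑ j, log (2⁻¹ * gaussPdf d 0 1 (e2 j)) ≤
      gmmObj e1 e2 w1 w2 (GMMParams.spike (e1 i₀) ε : GMMParams d (K + 2)) := by
  have hV := GMMParams.spike_valid (K := K) (e1 i₀) hε
  have hwide : ∀ x, log (2⁻¹ * gaussPdf d 0 1 x) ≤ mixLogLik (GMMParams.spike (e1 i₀) ε) x :=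
    fun x => by
      simpa [GMMParams.spike] using log_le_mixLogLik hV (k := 1) (by simp [GMMParams.spike]) x
  have hnarrow : log 2⁻¹ - d / 2 * log (2 * π) - d / 2 * log ε ≤
      mixLogLik (GMMParams.spike (e1 i₀) ε : GMMParams d (K + 2)) (e1 i₀) := by
    have h : log (2⁻¹ * gaussPdf d (e1 i₀) (ε • 1) (e1 i₀)) ≤
        mixLogLik (GMMParams.spike (e1 i₀) ε : GMMParams d (K + 2)) (e1 i₀) := by
      simpa [GMMParams.spike] using
        log_le_mixLogLik hV (k := 0) (by norm_num [GMMParams.spike]) (e1 i₀)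
    rw [log_mul (by norm_num) (gaussPdf_pos (Matrix.PosDef.one.smul hε) _).ne',
      log_gaussPdf_smul_one_self _ hε] at h
    linarith
  rw [gmmObj, ← Finset.add_sum_erase _ _ (Finset.mem_univ i₀)]
  gcongr <;> exact hwide _

theorem not_bddAbove_gmmObj (hd : 0 < d) (hN : 0 < N) (e1 : Fin N → Fin d → ℝ)
    (e2 : Fin Ns → Fin d → ℝ) {w1 w2 : ℝ} (hw1 : 0 < w1) (hw2 : 0 ≤ w2) :
    ¬BddAbove (gmmObj e1 e2 w1 w2 '' {Θ : GMMParams d (K + 2) | Θ.Valid}) := by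
  rintro ⟨M, hM⟩
  set A := w1 * (log 2⁻¹ - d / 2 * log (2 * π) +
        ∑ i ∈ Finset.univ.erase ⟨0, hN⟩, log (2⁻¹ * gaussPdf d 0 1 (e1 i))) +
      w2 * ∑ j, log (2⁻¹ * gaussPdf d 0 1 (e2 j)) with hA
  -- With `ε = exp t`, the narrow component contributes `-(d/2) t` at its centre; take `t ≪ 0`.
  set t := -2 * (M + 1 - A) / (w1 * d)
  have hbound := le_gmmObj_spike (K := K) e1 e2 hw1.le hw2 ⟨0, hN⟩ (exp_pos t)
  have hmem := hM (Set.mem_image_of_mem _ (GMMParams.spike_valid (K := K) (e1 ⟨0, hN⟩) (exp_pos t)))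
  rw [log_exp] at hbound
  have ht : w1 * (d / 2 * t) = -(M + 1 - A) := by
    simp only [t]; field_simp
  linarith

end Unbounded

theorem mixLogLik_eq_of_isMaxOn {d K N Ns : ℕ} (hN : 0 < N) {e1 : Fin N → Fin d → ℝ}
    {e2 : Fin Ns → Fin d → ℝ} {w1 w2 : ℝ} (hw1 : 0 < w1) (hw2 : 0 ≤ w2)
    {Θ₁ Θ₂ : GMMParams d K} (hV₁ : Θ₁.Valid) (hV₂ : Θ₂.Valid)
    (h₁ : IsMaxOn (gmmObj e1 e2 w1 w2) {Θ | Θ.Valid} Θ₁)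
    (h₂ : IsMaxOn (gmmObj e1 e2 w1 w2) {Θ | Θ.Valid} Θ₂) (x : Fin d → ℝ) :
    mixLogLik Θ₁ x = mixLogLik Θ₂ x := by
  rcases K with _ | _ | K
  · simpa using hV₁.2.1
  · have hN' : (0 : ℝ) < N := by exact_mod_cast hN
    exact mixLogLik_eq_of_isMaxOn_single (by positivity) hV₁ hV₂ h₁ h₂ x
  · rcases Nat.eq_zero_or_pos d with rfl | hd
    · rw [mixLogLik_of_dim_zero hV₁, mixLogLik_of_dim_zero hV₂]
    · exact absurd h₁.bddAbove (not_bddAbove_gmmObj hd hN e1 e2 hw1 hw2)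

theorem stmt_9_general (d K N Ns : ℕ) (hN : 0 < N)
    (e1 : Fin N → Fin d → ℝ) (e2 : Fin Ns → Fin d → ℝ)
    (lam1 lam2 : ℝ)
    (hlam1l : 1 / ((N : ℝ) + Ns) ≤ lam1)
    (hlam2l : 0 < lam2) (hlam2u : lam2 ≤ 1 / ((N : ℝ) + Ns))
    (hsum : (N : ℝ) * lam1 + (Ns : ℝ) * lam2 = 1)
    (ThetaI ThetaG ThetaA : GMMParams d K)
    (hVI : ThetaI.Valid) (hVA : ThetaA.Valid)
    (hI : ∀ Θ : GMMParams d K, Θ.Valid →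
      gmmObj e1 e2 (1 / ((N : ℝ) + Ns)) (1 / ((N : ℝ) + Ns)) Θ ≤
      gmmObj e1 e2 (1 / ((N : ℝ) + Ns)) (1 / ((N : ℝ) + Ns)) ThetaI)
    (hG : ∀ Θ : GMMParams d K, Θ.Valid →
      gmmObj e1 e2 (1 / (N : ℝ)) 0 Θ ≤ gmmObj e1 e2 (1 / (N : ℝ)) 0 ThetaG)
    (hA : ∀ Θ : GMMParams d K, Θ.Valid →
      gmmObj e1 e2 lam1 lam2 Θ ≤ gmmObj e1 e2 lam1 lam2 ThetaA) :
    gmmObj e1 e2 (1 / (N : ℝ)) 0 ThetaI ≤ gmmObj e1 e2 (1 / (N : ℝ)) 0 ThetaA ∧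
    gmmObj e1 e2 (1 / (N : ℝ)) 0 ThetaA ≤ gmmObj e1 e2 (1 / (N : ℝ)) 0 ThetaG := by
  have hN' : (0 : ℝ) < N := by exact_mod_cast hN
  have hc : 0 < 1 / ((N : ℝ) + Ns) := by positivity
  refine ⟨?_, hG ThetaA hVA⟩
  suffices h : ∑ i, mixLogLik ThetaI (e1 i) ≤ ∑ i, mixLogLik ThetaA (e1 i) by
    simpa [gmmObj] using mul_le_mul_of_nonneg_left h (one_div_pos.mpr hN').le
  rcases hlam2u.lt_or_eq with hlt | rfl
  · exact le_of_isMaxOn_weighted_sum (f := fun Θ => ∑ i, mixLogLik Θ (e1 i))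
      (g := fun Θ => ∑ i, mixLogLik Θ (e2 i)) hlam2l.le hc.le (by nlinarith) hI hA hVI hVA
  · obtain rfl : lam1 = 1 / ((N : ℝ) + Ns) := by
      rw [eq_div_iff (by positivity)]
      refine mul_left_cancel₀ hN'.ne' ?_
      field_simp at hsum
      linarith
    exact Finset.sum_le_sum fun i _ =>
      (mixLogLik_eq_of_isMaxOn hN hc hc.le hVI hVA hI hA (e1 i)).le

/-- Ordering of GMM solutions under the identical, attention-based, and
ground-truth weighting schemes, evaluated at the ground-truth weights. -/
theorem stmt_9 (d K N Ns : ℕ) (hN : 0 < N) (hNs : 0 < Ns)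
    (e1 : Fin N → Fin d → ℝ) (e2 : Fin Ns → Fin d → ℝ)
    (lam1 lam2 : ℝ)
    (hlam1l : 1 / ((N : ℝ) + Ns) ≤ lam1) (hlam1u : lam1 ≤ 1 / (N : ℝ))
    (hlam2l : 0 < lam2) (hlam2u : lam2 ≤ 1 / ((N : ℝ) + Ns))
    (hsum : (N : ℝ) * lam1 + (Ns : ℝ) * lam2 = 1)
    (ThetaI ThetaG ThetaA : GMMParams d K)
    (hVI : ThetaI.Valid) (hVG : ThetaG.Valid) (hVA : ThetaA.Valid)
    (hI : ∀ Θ : GMMParams d K, Θ.Valid →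
      gmmObj e1 e2 (1 / ((N : ℝ) + Ns)) (1 / ((N : ℝ) + Ns)) Θ ≤
      gmmObj e1 e2 (1 / ((N : ℝ) + Ns)) (1 / ((N : ℝ) + Ns)) ThetaI)
    (hG : ∀ Θ : GMMParams d K, Θ.Valid →
      gmmObj e1 e2 (1 / (N : ℝ)) 0 Θ ≤ gmmObj e1 e2 (1 / (N : ℝ)) 0 ThetaG)
    (hA : ∀ Θ : GMMParams d K, Θ.Valid →
      gmmObj e1 e2 lam1 lam2 Θ ≤ gmmObj e1 e2 lam1 lam2 ThetaA) :
    gmmObj e1 e2 (1 / (N : ℝ)) 0 ThetaI ≤ gmmObj e1 e2 (1 / (N : ℝ)) 0 ThetaA ∧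
    gmmObj e1 e2 (1 / (N : ℝ)) 0 ThetaA ≤ gmmObj e1 e2 (1 / (N : ℝ)) 0 ThetaG :=
  stmt_9_general d K N Ns hN e1 e2 lam1 lam2 hlam1l hlam2l hlam2u hsum ThetaI ThetaG ThetaA hVI hVA
    hI hG hA
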